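/- Let G: ℝ^d → ℝ^d be defined by G(θ) = Σ_{i=1}^{n} (σ(θᵀzᵢ) − σ(θ₀ᵀzᵢ)) zᵢ + λθ for fixed θ₀, z₁,...,z_n ∈ ℝ^d, λ > 0, and σ the sigmoid. Suppose every derivative σ'(x) at relevant points is at least κ > 0, and let M = (λ/κ)I + Σᵢ zᵢzᵢᵀ. Then for any θ₁, θ₂ ∈ ℝ^d, ‖G(θ₁) − G(θ₂)‖_{M⁻¹} ≥ κ ‖θ₁ − θ₂‖_M. -/

import Mathlib

open Matrix

/-- The sigmoid (logistic) function `σ(x) = 1/(1 + e^{-x})`. -/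
noncomputable def sigmoid (x : ℝ) : ℝ := 1 / (1 + Real.exp (-x))

lemma sigmoid_diff : Differentiable ℝ sigmoid := by
  unfold sigmoid
  exact Differentiable.div (differentiable_const 1) (by fun_prop)
    (fun x => by positivity)

lemma dotProduct_sum' {d n : ℕ} (x : Fin d → ℝ) (f : Fin n → Fin d → ℝ) :
    x ⬝ᵥ (∑ i, f i) = ∑ i, x ⬝ᵥ f i := by
  simp [dotProduct, Finset.sum_apply, Finset.mul_sum]
  exact Finset.sum_comm

lemma mulVec_formula {d n : ℕ} (lam κ : ℝ) (z : Fin n → Fin d → ℝ)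
    (x : Fin d → ℝ) :
    ((lam / κ) • (1 : Matrix (Fin d) (Fin d) ℝ) + ∑ i, vecMulVec (z i) (z i)) *ᵥ x
      = (lam/κ) • x + ∑ i, (z i ⬝ᵥ x) • z i := by
  ext j
  simp only [mulVec, dotProduct, Matrix.add_apply, Matrix.smul_apply, Matrix.one_apply,
    Matrix.sum_apply, Finset.sum_apply, vecMulVec_apply, Pi.add_apply, Pi.smul_apply,
    smul_eq_mul, add_mul, Finset.sum_mul, Finset.sum_add_distrib, ite_mul, zero_mul, mul_one,
    Finset.sum_ite_eq, Finset.mem_univ, if_true]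
  rw [Finset.sum_comm]
  congr 1
  · simp [ite_mul, mul_ite]
  · exact Finset.sum_congr rfl fun i _ =>
      Finset.sum_congr rfl fun k _ => by ring

/-- Let `G(θ) = Σᵢ (σ(θᵀzᵢ) − σ(θ₀ᵀzᵢ))zᵢ + λθ` and
`M = (λ/κ)I + Σᵢ zᵢzᵢᵀ` with `λ, κ > 0`.  If the derivative of the sigmoid at all
relevant points (i.e. at `θ̄ᵀzᵢ` for every `θ̄` on the segment between `θ₁` and
`θ₂`) is at least `κ`, then `‖G(θ₁) − G(θ₂)‖_{M⁻¹} ≥ κ‖θ₁ − θ₂‖_M`. -/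
theorem stmt12 {d n : ℕ} (lam κ : ℝ) (hlam : 0 < lam) (hκ : 0 < κ)
    (θ₀ : Fin d → ℝ) (z : Fin n → Fin d → ℝ)
    (G : (Fin d → ℝ) → (Fin d → ℝ))
    (hG : ∀ θ, G θ
        = (∑ i, (sigmoid (θ ⬝ᵥ z i) - sigmoid (θ₀ ⬝ᵥ z i)) • z i) + lam • θ)
    (M : Matrix (Fin d) (Fin d) ℝ)
    (hM : M = (lam / κ) • (1 : Matrix (Fin d) (Fin d) ℝ)
        + ∑ i, vecMulVec (z i) (z i))
    (θ₁ θ₂ : Fin d → ℝ)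
    (hderiv : ∀ c ∈ Set.Icc (0 : ℝ) 1, ∀ i,
        κ ≤ deriv sigmoid ((c • θ₁ + (1 - c) • θ₂) ⬝ᵥ z i)) :
    κ * Real.sqrt ((θ₁ - θ₂) ⬝ᵥ M.mulVec (θ₁ - θ₂)) ≤
      Real.sqrt ((G θ₁ - G θ₂) ⬝ᵥ M⁻¹.mulVec (G θ₁ - G θ₂)) := by
  set u := θ₁ - θ₂ with hu
  set v := G θ₁ - G θ₂ with hv0
  have hMv : ∀ x, M *ᵥ x = (lam/κ) • x + ∑ i, (z i ⬝ᵥ x) • z i := by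
    intro x; rw [hM]; exact mulVec_formula lam κ z x
  have qform : ∀ x : Fin d → ℝ,
      x ⬝ᵥ M *ᵥ x = (lam/κ) * (x ⬝ᵥ x) + ∑ i, (x ⬝ᵥ z i)^2 := by
    intro x
    rw [hMv, dotProduct_add, dotProduct_sum']
    simp only [dotProduct_smul, smul_eq_mul]
    congr 1
    exact Finset.sum_congr rfl fun i _ => by
      rw [dotProduct_comm (z i) x]; ring
  have hMnn : ∀ x : Fin d → ℝ, 0 ≤ x ⬝ᵥ M *ᵥ x := by
    intro x
    rw [qform]
    have h1 : 0 ≤ x ⬝ᵥ x :=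
      Finset.sum_nonneg fun i _ => mul_self_nonneg _
    exact add_nonneg (mul_nonneg (div_nonneg hlam.le hκ.le) h1)
      (Finset.sum_nonneg fun i _ => sq_nonneg _)
  -- mean value theorem
  have key : ∀ i, ∃ a, κ ≤ a ∧
      sigmoid (θ₁ ⬝ᵥ z i) - sigmoid (θ₂ ⬝ᵥ z i) = a * (u ⬝ᵥ z i) := by
    intro i
    set b := u ⬝ᵥ z i with hb
    set e := θ₂ ⬝ᵥ z i with he
    have hbe : b = θ₁ ⬝ᵥ z i - e := by rw [hb, he, hu, sub_dotProduct]
    have hf : ∀ t : ℝ, HasDerivAt (fun s => sigmoid (s*b + e))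
        (deriv sigmoid (t*b+e) * b) t := by
      intro t
      have h1 : HasDerivAt (fun s : ℝ => s*b + e) b t := by
        simpa using ((hasDerivAt_id t).mul_const b).add_const e
      have h3 := ((sigmoid_diff (t*b+e)).hasDerivAt).comp t h1
      exact h3
    obtain ⟨c, hc, hceq⟩ := exists_hasDerivAt_eq_slope (fun s => sigmoid (s*b + e))
      (fun t => deriv sigmoid (t*b+e) * b) one_pos
      (Continuous.continuousOn (continuous_iff_continuousAt.2
        fun t => (hf t).continuousAt))
      (fun t _ => hf t)
    refine ⟨deriv sigmoid (c*b+e), ?_, ?_⟩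
    · have hmem : c ∈ Set.Icc (0:ℝ) 1 := ⟨hc.1.le, hc.2.le⟩
      have h2 := hderiv c hmem i
      have heq : (c • θ₁ + (1 - c) • θ₂) ⬝ᵥ z i = c*b + e := by
        rw [add_dotProduct, smul_dotProduct, smul_dotProduct, hbe]
        simp only [smul_eq_mul, ← he]
        ring
      rwa [heq] at h2
    · have hb1 : (1:ℝ)*b + e = θ₁ ⬝ᵥ z i := by rw [hbe]; ring
      have hb0 : (0:ℝ)*b + e = e := by ring
      rw [hb1, hb0, sub_zero, div_one] at hceq
      exact hceq.symm
  choose a ha hA using key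
  -- expression for G θ₁ - G θ₂
  have hv : v = (∑ i, (a i * (u ⬝ᵥ z i)) • z i) + lam • u := by
    rw [hv0, hG θ₁, hG θ₂, hu, add_sub_add_comm, ← Finset.sum_sub_distrib, ← smul_sub]
    congr 1
    refine Finset.sum_congr rfl fun i _ => ?_
    rw [← sub_smul, ← hA i]
    congr 1
    ring
  set w := M⁻¹ *ᵥ v with hw
  set B := u ⬝ᵥ v with hB
  set C := u ⬝ᵥ M *ᵥ u with hC
  set A := v ⬝ᵥ w with hAdef
  have huv : B = (∑ i, a i * (u ⬝ᵥ z i)^2) + lam * (u ⬝ᵥ u) := by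
    rw [hB, hv, dotProduct_add, dotProduct_sum']
    simp only [dotProduct_smul, smul_eq_mul]
    congr 1
    exact Finset.sum_congr rfl fun i _ => by ring
  have key1 : κ * C ≤ B := by
    rw [hC, qform, huv, mul_add, ← mul_assoc, mul_div_cancel₀ lam hκ.ne', Finset.mul_sum,
      add_comm]
    gcongr with i hi
    exact ha i
  have hC0 : 0 ≤ C := hMnn u
  -- symmetry
  have hMT : Mᵀ = M := by
    rw [hM]
    ext i j
    simp only [Matrix.transpose_apply, Matrix.add_apply, Matrix.smul_apply,
      Matrix.sum_apply, vecMulVec_apply, smul_eq_mul]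
    congr 1
    · simp [Matrix.one_apply, eq_comm]
    · exact Finset.sum_congr rfl fun k _ => mul_comm _ _
  have hsym : M.IsHermitian := by
    ext i j
    rw [Matrix.conjTranspose_apply, star_trivial]
    exact congrFun (congrFun hMT i) j
  have symdot : ∀ x y : Fin d → ℝ, x ⬝ᵥ M *ᵥ y = y ⬝ᵥ M *ᵥ x := by
    intro x y
    rw [Matrix.dotProduct_mulVec, ← Matrix.mulVec_transpose, hMT, dotProduct_comm]
  -- positive definiteness and invertibility
  have hpd : M.PosDef := by
    refine Matrix.PosDef.of_dotProduct_mulVec_pos hsym fun x hx => ?_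
    have hsx : star x = x := funext fun i => rfl
    rw [hsx, qform]
    have hxx : 0 < x ⬝ᵥ x :=
      lt_of_le_of_ne
        (Finset.sum_nonneg fun i _ => mul_self_nonneg _)
        (Ne.symm (fun h => hx (dotProduct_self_eq_zero.mp h)))
    exact add_pos_of_pos_of_nonneg (mul_pos (div_pos hlam hκ) hxx)
      (Finset.sum_nonneg fun i _ => sq_nonneg _)
  have hdet : IsUnit M.det := (Matrix.isUnit_iff_isUnit_det M).mp hpd.isUnit
  have hMMinv : M * M⁻¹ = 1 := Matrix.mul_nonsing_inv M hdet
  have hMw : M *ᵥ w = v := by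
    rw [hw, Matrix.mulVec_mulVec, hMMinv, Matrix.one_mulVec]
  -- key dot products
  have e1 : u ⬝ᵥ M *ᵥ w = B := by rw [hMw]
  have e2 : w ⬝ᵥ M *ᵥ u = B := by rw [symdot w u]; exact e1
  have e3 : w ⬝ᵥ M *ᵥ w = A := by rw [hMw, dotProduct_comm]
  have hA0 : 0 ≤ A := by
    have h := hMnn w
    rwa [e3] at h
  -- Cauchy-Schwarz via quadratic discriminant
  have hquad : ∀ t : ℝ, 0 ≤ A * (t*t) + (-(2*B)) * t + C := by
    intro t
    have h0 := hMnn (u - t • w)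
    have expand : (u - t • w) ⬝ᵥ M *ᵥ (u - t • w)
        = C - t*B - t*B + t*(t*A) := by
      rw [Matrix.mulVec_sub, Matrix.mulVec_smul, sub_dotProduct, dotProduct_sub,
        dotProduct_sub, dotProduct_smul, smul_dotProduct, smul_dotProduct,
        dotProduct_smul]
      simp only [smul_eq_mul]
      rw [e1, e2, e3, ← hC]
      ring
    rw [expand] at h0
    nlinarith [h0]
  have hd := discrim_le_zero hquad
  rw [discrim] at hd
  have hBAC : B^2 ≤ A*C := by nlinarith [hd]
  have hBnn : 0 ≤ B := le_trans (mul_nonneg hκ.le hC0) key1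
  rcases hC0.eq_or_lt with h | h
  · rw [← h, Real.sqrt_zero, mul_zero]
    exact Real.sqrt_nonneg _
  · have hBB : (κ*C)*(κ*C) ≤ B*B := mul_self_le_mul_self (mul_nonneg hκ.le hC0) key1
    have hBAC' : B*B ≤ A*C := by nlinarith [hBAC]
    have hkey : κ^2 * C ≤ A := by nlinarith [hBB, hBAC', h]
    calc κ * Real.sqrt C = Real.sqrt (κ^2 * C) := by
          rw [Real.sqrt_mul (sq_nonneg κ), Real.sqrt_sq hκ.le]
      _ ≤ Real.sqrt A := Real.sqrt_le_sqrt hkey
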